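/- Let a, b, c, d be integers with a ≤ c and b ≤ d, let m ≥ 0, and let S_i = (x_i, y_i) ∈ ℤ², i = 1, ..., m, be lattice points with a ≤ x_i ≤ c and b ≤ y_i ≤ d for all i. Set S_0 = (x_0, y_0) = (a,b) and S_{m+1} = (x_{m+1}, y_{m+1}) = (c,d). Then the maximum of NE(P) over all lattice paths P from (a,b) to (c,d) which stay weakly south-east of S_i for every i = 1, ..., m equals c − b − max{x_i − y_i : 0 ≤ i ≤ m+1}. -/

import Mathlib

/-- A lattice path from `A` to `B`: a list of points of `ℤ × ℤ` whose consecutive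
differences are the unit steps `(1,0)` or `(0,1)`, starting at `A` and ending at `B`. -/
def IsLatticePathFrom (P : List (ℤ × ℤ)) (A B : ℤ × ℤ) : Prop :=
  P.Chain' (fun p q => q = (p.1 + 1, p.2) ∨ q = (p.1, p.2 + 1)) ∧
    P.head? = some A ∧ P.getLast? = some B

/-- The list of NE-turns of a lattice path: the points of the path that are the end
point of a vertical step and at the same time the starting point of a horizontal step. -/
def NETurns : List (ℤ × ℤ) → List (ℤ × ℤ)
  | p :: q :: r :: rest =>
      (if q = (p.1, p.2 + 1) ∧ r = (q.1 + 1, q.2) then [q] else []) ++ NETurns (q :: r :: rest)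
  | _ => []

/-- `(x,y)` lies weakly south-east of `S` if `x ≥ S.1` or `y ≤ S.2`. -/
def WeaklySE (p S : ℤ × ℤ) : Prop := S.1 ≤ p.1 ∨ p.2 ≤ S.2

/-- `(x,y)` lies weakly north-west of `T` if `x ≤ T.1` or `y ≥ T.2`. -/
def WeaklyNW (p T : ℤ × ℤ) : Prop := p.1 ≤ T.1 ∨ T.2 ≤ p.2

/-- A path stays weakly south-east of `S` if every point on it does. -/
def StaysSE (P : List (ℤ × ℤ)) (S : ℤ × ℤ) : Prop := ∀ p ∈ P, WeaklySE p S

/-- A path stays weakly north-west of `T` if every point on it does. -/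
def StaysNW (P : List (ℤ × ℤ)) (T : ℤ × ℤ) : Prop := ∀ p ∈ P, WeaklyNW p T

/-- A family of lattice paths is non-intersecting if no two of its members share a point. -/
def NonIntersecting {n : ℕ} (F : Fin n → List (ℤ × ℤ)) : Prop :=
  ∀ i j, i ≠ j → ∀ p, p ∈ F i → p ∉ F j

/-! ### Auxiliary machinery -/

/-!
The NE-turns of a lattice path `P` from `(a, b)` to `(c, d)` have strictly increasing
abscissae and ordinates; each lies in a row `b + 1, …, d` and a column `a, …, c - 1`. If `P`
stays weakly south-east of `S = (s₁, s₂)`, a turn above row `s₂` lies in a column `≥ s₁`, so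
at most `s₂ - b` turns lie in rows `b + 1, …, s₂` and at most `c - s₁` in the other ones:
`NE(P) ≤ c - b - (s₁ - s₂)`. Every such path stays weakly south-east of `(a, b)` and `(c, d)`,
so this applies to each `S_i`, `0 ≤ i ≤ m + 1`. Conversely, for the maximum `M` of the
`x_i - y_i`, the path `E^(M - a + b) (NE)^(c - b - M) N^(d - c + M)` has `c - b - M` turns, and
its zigzag part stays on the diagonals `x - y ∈ {M - 1, M}`, hence weakly south-east of every
`S_i`.
-/

lemma List.Pairwise.le_of_head?_eq {α : Type*} [Preorder α] {l : List α} {a b : α}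
    (hl : l.Pairwise (· ≤ ·)) (ha : l.head? = some a) (hb : b ∈ l) : a ≤ b := by
  obtain ⟨t, rfl⟩ := List.head?_eq_some_iff.1 ha
  rcases List.mem_cons.1 hb with rfl | hb
  · exact le_rfl
  · exact List.rel_of_pairwise_cons hl hb

lemma List.Pairwise.le_of_getLast?_eq {α : Type*} [Preorder α] {l : List α} {a b : α}
    (hl : l.Pairwise (· ≤ ·)) (ha : l.getLast? = some a) (hb : b ∈ l) : b ≤ a := by
  obtain ⟨t, rfl⟩ := List.getLast?_eq_some_iff.1 ha
  rcases List.mem_append.1 hb with hb | hb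
  · exact (List.pairwise_append.1 hl).2.2 b hb a (List.mem_singleton_self a)
  · rw [List.mem_singleton.1 hb]

lemma List.Nodup.length_le_card_of_forall_mem {α : Type*} [DecidableEq α]
    {l : List α} (hl : l.Nodup) {s : Finset α} (h : ∀ x ∈ l, x ∈ s) : l.length ≤ s.card := by
  rw [← List.toFinset_card_of_nodup hl]
  exact Finset.card_le_card fun x hx => h x (List.mem_toFinset.1 hx)

def IsUnitStep (p q : ℤ × ℤ) : Prop := q = (p.1 + 1, p.2) ∨ q = (p.1, p.2 + 1)

lemma IsUnitStep.le {p q : ℤ × ℤ} (h : IsUnitStep p q) : p ≤ q := by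
  rcases h with rfl | rfl <;> simp [Prod.le_def]

lemma List.IsChain.pairwise_le_of_isUnitStep {P : List (ℤ × ℤ)} (h : P.IsChain IsUnitStep) :
    P.Pairwise (· ≤ ·) :=
  List.isChain_iff_pairwise.1 (h.imp fun _ _ => IsUnitStep.le)

namespace IsLatticePathFrom

variable {P : List (ℤ × ℤ)} {A B : ℤ × ℤ}

lemma mem_Icc (hP : IsLatticePathFrom P A B) {q : ℤ × ℤ} (hq : q ∈ P) : A ≤ q ∧ q ≤ B :=
  have hle := List.IsChain.pairwise_le_of_isUnitStep hP.1
  ⟨hle.le_of_head?_eq hP.2.1 hq, hle.le_of_getLast?_eq hP.2.2 hq⟩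

lemma staysSE_start (hP : IsLatticePathFrom P A B) : StaysSE P A :=
  fun _ hq => Or.inl (hP.mem_Icc hq).1.1

lemma staysSE_end (hP : IsLatticePathFrom P A B) : StaysSE P B :=
  fun _ hq => Or.inr (hP.mem_Icc hq).2.2

lemma cons (hP : IsLatticePathFrom P A B) {p : ℤ × ℤ} (hp : IsUnitStep p A) :
    IsLatticePathFrom (p :: P) p B := by
  obtain ⟨t, rfl⟩ := List.head?_eq_some_iff.1 hP.2.1
  exact ⟨List.isChain_cons_cons.2 ⟨hp, hP.1⟩, rfl, by simpa using hP.2.2⟩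

end IsLatticePathFrom

lemma NETurns_cons_cons (p q : ℤ × ℤ) (l : List (ℤ × ℤ)) :
    NETurns (p :: q :: l) =
      (if q = (p.1, p.2 + 1) ∧ l.head? = some (q.1 + 1, q.2) then [q] else []) ++
        NETurns (q :: l) := by
  cases l <;> simp [NETurns]

lemma infix_of_mem_NETurns {P : List (ℤ × ℤ)} {t : ℤ × ℤ} (ht : t ∈ NETurns P) :
    [(t.1, t.2 - 1), t, (t.1 + 1, t.2)] <:+: P := by
  induction P with
  | nil => simp [NETurns] at ht
  | cons p l ih =>
    cases l with
    | nil => simp [NETurns] at ht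
    | cons q l =>
      rw [NETurns_cons_cons, List.mem_append] at ht
      rcases ht with ht | ht
      · split_ifs at ht with hturn
        · obtain ⟨hq, hl⟩ := hturn
          obtain ⟨l, rfl⟩ := List.head?_eq_some_iff.1 hl
          rw [List.mem_singleton.1 ht, hq]
          exact ⟨[], l, by simp⟩
        · simp at ht
      · exact (ih ht).trans (List.suffix_cons p _).isInfix

lemma pairwise_NETurns {P : List (ℤ × ℤ)} (hP : P.IsChain IsUnitStep) :
    (NETurns P).Pairwise (fun u v => u.1 < v.1 ∧ u.2 < v.2) := by
  induction P with
  | nil => simp [NETurns]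
  | cons p l ih =>
    cases l with
    | nil => simp [NETurns]
    | cons q l =>
      have hql := (List.isChain_cons_cons.1 hP).2
      rw [NETurns_cons_cons]
      refine List.pairwise_append.2 ⟨by split_ifs <;> simp, ih hql, ?_⟩
      split_ifs with hturn
      · obtain ⟨hq, hl⟩ := hturn
        obtain ⟨l, rfl⟩ := List.head?_eq_some_iff.1 hl
        intro u hu v hv
        rw [List.mem_singleton.1 hu]
        rw [NETurns_cons_cons, if_neg (by simp [Prod.ext_iff]), List.nil_append] at hv
        -- the point below a later turn `v` comes after the east step leaving `q`
        have hr : (q.1 + 1, q.2) ≤ (v.1, v.2 - 1) :=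
          (List.isChain_cons_cons.1 hql).2.pairwise_le_of_isUnitStep.le_of_head?_eq rfl
            ((infix_of_mem_NETurns hv).subset (by simp))
        rw [Prod.mk_le_mk] at hr
        omega
      · simp

lemma length_NETurns_le {P : List (ℤ × ℤ)} {a b c d : ℤ} {s : ℤ × ℤ}
    (hP : IsLatticePathFrom P (a, b) (c, d)) (hs : StaysSE P s) :
    (NETurns P).length ≤ (c - s.1).toNat + (s.2 - b).toNat := by
  have hT := pairwise_NETurns hP.1
  have hbox : ∀ t ∈ NETurns P, b < t.2 ∧ t.1 < c ∧ WeaklySE t s := by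
    intro t ht
    have hsub := (infix_of_mem_NETurns ht).subset
    have hb := (hP.mem_Icc (q := (t.1, t.2 - 1)) (hsub (by simp))).1
    have hc := (hP.mem_Icc (q := (t.1 + 1, t.2)) (hsub (by simp))).2
    simp only [Prod.mk_le_mk] at hb hc
    exact ⟨by omega, by omega, hs t (hsub (by simp))⟩
  rw [List.length_eq_length_filter_add (fun t => decide (t.2 ≤ s.2)), add_comm]
  gcongr
  · rw [← List.length_map Prod.fst, ← Int.card_Ico]
    refine ((hT.sublist List.filter_sublist).map (S := (· < ·)) _
      fun _ _ h => h.1).nodup.length_le_card_of_forall_mem ?_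
    simp only [List.mem_map, List.mem_filter, Finset.mem_Ico]
    rintro _ ⟨t, ⟨ht, hts⟩, rfl⟩
    have := hbox t ht
    simp only [WeaklySE, Bool.not_eq_true', decide_eq_false_iff_not] at this hts
    omega
  · rw [← List.length_map Prod.snd, ← Int.card_Ioc]
    refine ((hT.sublist List.filter_sublist).map (S := (· < ·)) _
      fun _ _ h => h.2).nodup.length_le_card_of_forall_mem ?_
    simp only [List.mem_map, List.mem_filter, Finset.mem_Ioc, decide_eq_true_eq]
    rintro _ ⟨t, ⟨ht, hts⟩, rfl⟩
    exact ⟨(hbox t ht).1, hts⟩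

/-- The path `E^e (NE)^k N^f` starting at `p`. -/
def stairPath : ℤ × ℤ → ℕ → ℕ → ℕ → List (ℤ × ℤ)
  | p, e + 1, k, f => p :: stairPath (p.1 + 1, p.2) e k f
  | p, 0, k + 1, f => p :: (p.1, p.2 + 1) :: stairPath (p.1 + 1, p.2 + 1) 0 k f
  | p, 0, 0, f + 1 => p :: stairPath (p.1, p.2 + 1) 0 0 f
  | p, 0, 0, 0 => [p]

lemma stairPath_eq_cons (p : ℤ × ℤ) (e k f : ℕ) :
    stairPath p e k f = p :: (stairPath p e k f).tail := by
  cases e <;> cases k <;> cases f <;> simp [stairPath]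

lemma isLatticePathFrom_stairPath (p : ℤ × ℤ) (e k f : ℕ) :
    IsLatticePathFrom (stairPath p e k f) p (p.1 + e + k, p.2 + k + f) := by
  fun_induction stairPath p e k f with
  | case1 p e k f ih =>
    convert ih.cons (Or.inl rfl) using 2
    push_cast; ring
  | case2 p k f ih =>
    convert (ih.cons (Or.inl rfl)).cons (Or.inr rfl) using 2 <;> push_cast <;> ring
  | case3 p f ih =>
    convert ih.cons (Or.inr rfl) using 2
    push_cast; ring
  | case4 p => simpa using ⟨List.isChain_singleton p, rfl, rfl⟩

lemma length_NETurns_stairPath (p : ℤ × ℤ) (e k f : ℕ) :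
    (NETurns (stairPath p e k f)).length = k := by
  fun_induction stairPath p e k f with
  | case1 p e k f ih =>
    rw [stairPath_eq_cons, NETurns_cons_cons, if_neg (by simp [Prod.ext_iff]), List.nil_append,
      ← stairPath_eq_cons, ih]
  | case2 p k f ih =>
    rw [stairPath_eq_cons, NETurns_cons_cons, if_pos ⟨rfl, rfl⟩, NETurns_cons_cons,
      if_neg (by simp [Prod.ext_iff]), List.nil_append, ← stairPath_eq_cons, List.length_append,
      ih, List.length_singleton, add_comm]
  | case3 p f ih =>
    have hvert : ∀ z ∈ (stairPath (p.1, p.2 + 1) 0 0 f).tail, z.1 ≤ p.1 := fun z hz => by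
      simpa using ((isLatticePathFrom_stairPath _ 0 0 f).mem_Icc (List.mem_of_mem_tail hz)).2.1
    rw [stairPath_eq_cons, NETurns_cons_cons, if_neg, List.nil_append, ← stairPath_eq_cons, ih]
    rintro ⟨-, hz⟩
    simpa using hvert _ (List.mem_of_mem_head? hz)
  | case4 p => rfl

lemma staysSE_stairPath {p s : ℤ × ℤ} {e k f : ℕ} (hp : WeaklySE p s)
    (hdiag : s.1 - s.2 ≤ p.1 + e - p.2) (heast : s.1 ≤ p.1 + e + k) :
    StaysSE (stairPath p e k f) s := by
  fun_induction stairPath p e k f with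
  | case1 p e k f ih =>
    refine List.forall_mem_cons.2 ⟨hp, ih ?_ ?_ ?_⟩ <;>
      simp only [WeaklySE] at * <;> push_cast at * <;> omega
  | case2 p k f ih =>
    refine List.forall_mem_cons.2 ⟨hp, List.forall_mem_cons.2 ⟨?_, ih ?_ ?_ ?_⟩⟩ <;>
      simp only [WeaklySE] at * <;> push_cast at * <;> omega
  | case3 p f =>
    refine List.forall_mem_cons.2 ⟨hp, fun q hq => Or.inl ?_⟩
    have hq := ((isLatticePathFrom_stairPath _ 0 0 f).mem_Icc hq).1
    rw [Prod.mk_le_mk] at hq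
    push_cast at heast
    omega
  | case4 p => simpa [StaysSE] using hp

lemma exists_isLatticePathFrom_length_NETurns_eq {a b c d M : ℤ} (ha : a - b ≤ M)
    (hd : c - d ≤ M) (hM : M ≤ c - b) :
    ∃ P, IsLatticePathFrom P (a, b) (c, d) ∧ ((NETurns P).length : ℤ) = c - b - M ∧
      ∀ s : ℤ × ℤ, b ≤ s.2 → s.1 ≤ c → s.1 - s.2 ≤ M → StaysSE P s := by
  refine ⟨stairPath (a, b) (M - (a - b)).toNat (c - b - M).toNat (d - c + M).toNat, ?_, ?_, ?_⟩
  · convert isLatticePathFrom_stairPath (a, b) _ _ _ using 2 <;> simp <;> omega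
  · rw [length_NETurns_stairPath]
    omega
  · intro s hb hc hsM
    exact staysSE_stairPath (Or.inr hb) (by simp only; omega) (by simp only; omega)

theorem remark2_maximum (a b c d : ℤ) (hac : a ≤ c) (hbd : b ≤ d)
    (m : ℕ) (x y : Fin m → ℤ)
    (hx : ∀ i, a ≤ x i ∧ x i ≤ c) (hy : ∀ i, b ≤ y i ∧ y i ≤ d) :
    IsGreatest
      {k : ℤ | ∃ P : List (ℤ × ℤ), IsLatticePathFrom P (a, b) (c, d) ∧
        (∀ i, StaysSE P (x i, y i)) ∧ k = (NETurns P).length}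
      (c - b - sSup (insert (a - b) (insert (c - d) (Set.range fun i => x i - y i)))) := by
  set D := insert (a - b) (insert (c - d) (Set.range fun i => x i - y i))
  have hD : D.Finite := ((Set.finite_range _).insert _).insert _
  have hle : ∀ z ∈ D, z ≤ sSup D := fun z hz => le_csSup hD.bddAbove hz
  obtain ⟨s, hsb, hsc, hsD, hs⟩ :
      ∃ s : ℤ × ℤ, b ≤ s.2 ∧ s.1 ≤ c ∧ s.1 - s.2 = sSup D ∧
        ∀ P, IsLatticePathFrom P (a, b) (c, d) → (∀ i, StaysSE P (x i, y i)) → StaysSE P s := by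
    rcases (Set.insert_nonempty _ _).csSup_mem hD with h | h | ⟨i, h⟩
    · exact ⟨(a, b), le_rfl, hac, h.symm, fun P hP _ => hP.staysSE_start⟩
    · exact ⟨(c, d), hbd, le_rfl, h.symm, fun P hP _ => hP.staysSE_end⟩
    · exact ⟨(x i, y i), (hy i).1, (hx i).2, h, fun _ _ hP => hP i⟩
  constructor
  · obtain ⟨P, hP, hlen, hPs⟩ := exists_isLatticePathFrom_length_NETurns_eq
      (hle (a - b) (by simp [D])) (hle (c - d) (by simp [D])) (by omega)
    exact ⟨P, hP, fun i => hPs _ (hy i).1 (hx i).2 (hle (x i - y i) (by simp [D])),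
      hlen.symm⟩
  · rintro _ ⟨P, hP, hPxy, rfl⟩
    have := length_NETurns_le hP (hs P hP hPxy)
    omega
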